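/- Let ν ≠ 0 and define the trichromatic complex amplitude A(ξ,τ) = 2 − 2e^{i(ν²ξ − ντ)} + e^{i(ν²ξ + ντ)}. Then: (i) if A(ξ,τ) = 0 at some point, then cos(2ντ) = 1/4; and (ii) there exist (ξ,τ) ∈ ℝ² with A(ξ,τ) = 0. Hence the trichromatic wave field possesses singular points. -/

import Mathlib

/-!
Factoring out the common phase, `A = 2 - e^{iφ} w(θ)` with `φ = ν²ξ`, `θ = ντ` and
`w(θ) = 2e^{-iθ} - e^{iθ} = cos θ - 3i sin θ`. Since `|e^{iφ}| = 1` and every phase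
occurs, `A(ξ, τ) = 0` for some `ξ` exactly when `|w(ντ)| = 2`, and `|w(θ)|² = cos² θ + 9 sin² θ = 5 - 4 cos 2θ`.
-/

open Complex in
theorem Complex.exists_exp_mul_I_mul_eq_norm (z : ℂ) : ∃ φ : ℝ, exp (φ * I) * z = ‖z‖ := by
  refine ⟨-arg z, ?_⟩
  conv_lhs => rw [← norm_mul_exp_arg_mul_I z]
  rw [mul_left_comm, ← exp_add]
  push_cast
  simp

namespace Trichromatic

open Complex

noncomputable def phaseFactor (θ : ℝ) : ℂ := 2 * exp (↑(-θ) * I) - exp (θ * I)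

theorem phaseFactor_eq (θ : ℝ) : phaseFactor θ = Real.cos θ + (-3 * Real.sin θ : ℝ) * I := by
  simp only [phaseFactor, exp_mul_I, ← ofReal_cos, ← ofReal_sin, Real.cos_neg, Real.sin_neg]
  push_cast
  ring

theorem norm_phaseFactor_sq (θ : ℝ) : ‖phaseFactor θ‖ ^ 2 = 5 - 4 * Real.cos (2 * θ) := by
  rw [Complex.sq_norm, phaseFactor_eq, normSq_add_mul_I, Real.cos_two_mul, Real.cos_sq' θ]
  ring

theorem norm_phaseFactor_eq_two_iff (θ : ℝ) :
    ‖phaseFactor θ‖ = 2 ↔ Real.cos (2 * θ) = 1 / 4 := by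
  rw [← sq_eq_sq₀ (norm_nonneg _) zero_le_two, norm_phaseFactor_sq]
  constructor <;> intro h <;> linarith

theorem amplitude_eq (ν ξ τ : ℝ) :
    2 - 2 * exp (I * ((ν : ℂ) ^ 2 * ξ - ν * τ)) + exp (I * ((ν : ℂ) ^ 2 * ξ + ν * τ)) =
      2 - exp (↑(ν ^ 2 * ξ) * I) * phaseFactor (ν * τ) := by
  simp only [phaseFactor, mul_sub, mul_left_comm _ (2 : ℂ), ← Complex.exp_add]
  push_cast
  ring_nf

end Trichromatic

open Trichromatic in
theorem trichromatic_singular_points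
    (ν : ℝ) (hν : ν ≠ 0)
    (A : ℝ → ℝ → ℂ)
    (hA : A = fun (ξ τ : ℝ) => 2 - 2 * Complex.exp (Complex.I * ((ν:ℂ)^2 * (ξ:ℂ) - (ν:ℂ) * (τ:ℂ))) +
                         Complex.exp (Complex.I * ((ν:ℂ)^2 * (ξ:ℂ) + (ν:ℂ) * (τ:ℂ)))) :
    (∀ ξ τ : ℝ, A ξ τ = 0 → Real.cos (2 * ν * τ) = 1/4) ∧
    (∃ ξ τ : ℝ, A ξ τ = 0) := by
  subst hA
  simp only [amplitude_eq, sub_eq_zero, eq_comm (a := (2 : ℂ))]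
  constructor
  · intro ξ τ h
    have hw : ‖phaseFactor (ν * τ)‖ = 2 := by
      simpa only [norm_mul, Complex.norm_exp_ofReal_mul_I, one_mul, Complex.norm_two]
        using congrArg norm h
    rw [mul_assoc]
    exact (norm_phaseFactor_eq_two_iff _).mp hw
  · set θ := Real.arccos (1 / 4) / 2
    have hw : ‖phaseFactor θ‖ = 2 := by
      rw [norm_phaseFactor_eq_two_iff, mul_div_cancel₀ _ two_ne_zero]
      exact Real.cos_arccos (by norm_num) (by norm_num)
    obtain ⟨φ, hφ⟩ := Complex.exists_exp_mul_I_mul_eq_norm (phaseFactor θ)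
    refine ⟨φ / ν ^ 2, θ / ν, ?_⟩
    rw [mul_div_cancel₀ _ (pow_ne_zero 2 hν), mul_div_cancel₀ _ hν, hφ, hw]
    norm_num
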